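/- arXiv:1208.1291 — 2 statements merged into one kernel-verified Lean document; each statement's English description precedes it below -/
import Mathlib

section
/- If M and N are kG-modules with diagonal G-action on M ⊗_k N, and M is weakly injective, then M ⊗_k N is weakly injective. -/
open Finset

universe u

section Prelude

variable {k G : Type u} [CommRing k] [Group G] [Fintype G]
variable {M N : Type u} [AddCommGroup M] [Module k M] [AddCommGroup N] [Module k N]

/-- The trace map `Tr_G(θ)(m) = ∑ g, g • θ(g⁻¹ • m)`. -/
noncomputable def traceMap (ρM : Representation k G M) (ρN : Representation k G N)
    (θ : M →ₗ[k] N) : M →ₗ[k] N :=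
  ∑ g : G, (ρN g) ∘ₗ θ ∘ₗ (ρM g⁻¹)

/-- `f` is a `kG`-module homomorphism, i.e. a `G`-equivariant `k`-linear map. -/
def IsGEquiv (ρM : Representation k G M) (ρN : Representation k G N)
    (f : M →ₗ[k] N) : Prop :=
  ∀ g : G, f ∘ₗ (ρM g) = (ρN g) ∘ₗ f

/-- The induced module `M↑G = kG ⊗ₖ M`, modelled as `G →₀ M`, where `h • (g ⊗ m) = hg ⊗ m`. -/
noncomputable def ind (k G M : Type u) [CommRing k] [Group G] [AddCommGroup M] [Module k M] :
    Representation k G (G →₀ M) where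
  toFun h := Finsupp.lmapDomain M k (fun x => h * x)
  map_one' := by
    refine LinearMap.ext fun f => ?_
    show Finsupp.mapDomain (fun x => (1:G) * x) f = f
    simp only [one_mul]
    exact Finsupp.mapDomain_id
  map_mul' h₁ h₂ := by
    refine LinearMap.ext fun f => ?_
    simp only [Finsupp.lmapDomain_apply, Module.End.mul_apply]
    rw [show (fun x => h₁ * h₂ * x) = (fun x => h₁ * x) ∘ (fun x => h₂ * x) by
      funext x; simp [mul_assoc]]
    exact Finsupp.mapDomain_comp

/-- The natural map `ι_M : M → M↑G`, `m ↦ ∑ g, g ⊗ g⁻¹m`. -/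
noncomputable def indI (ρM : Representation k G M) : M →ₗ[k] (G →₀ M) :=
  ∑ g : G, (Finsupp.lsingle g) ∘ₗ (ρM g⁻¹)

/-- The natural map `π_M : M↑G → M`, `g ⊗ m ↦ g·m`. -/
noncomputable def indP (ρM : Representation k G M) : (G →₀ M) →ₗ[k] M :=
  Finsupp.lsum k fun g => (ρM g : M →ₗ[k] M)

end Prelude

section WeakDefs

variable {k G : Type u} [CommRing k] [Group G] [Fintype G]

/-- A `kG`-module `P` is weakly projective if every `kG`-homomorphism out of `P`
lifts along any `k`-split epimorphism of `kG`-modules. -/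
def WeaklyProjective {P : Type u} [AddCommGroup P] [Module k P]
    (ρP : Representation k G P) : Prop :=
  ∀ (M N : Type u) [AddCommGroup M] [Module k M] [AddCommGroup N] [Module k N]
    (ρM : Representation k G M) (ρN : Representation k G N) (π : M →ₗ[k] N),
    IsGEquiv ρM ρN π → (∃ s : N →ₗ[k] M, π ∘ₗ s = LinearMap.id) →
    ∀ f : P →ₗ[k] N, IsGEquiv ρP ρN f →
      ∃ fl : P →ₗ[k] M, IsGEquiv ρP ρM fl ∧ π ∘ₗ fl = f

/-- A `kG`-module `P` is weakly injective if every `kG`-homomorphism into `P`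
extends along any `k`-split monomorphism of `kG`-modules. -/
def WeaklyInjective {P : Type u} [AddCommGroup P] [Module k P]
    (ρP : Representation k G P) : Prop :=
  ∀ (L M : Type u) [AddCommGroup L] [Module k L] [AddCommGroup M] [Module k M]
    (ρL : Representation k G L) (ρM : Representation k G M) (ι : L →ₗ[k] M),
    IsGEquiv ρL ρM ι → (∃ r : M →ₗ[k] L, r ∘ₗ ι = LinearMap.id) →
    ∀ f : L →ₗ[k] P, IsGEquiv ρL ρP f →
      ∃ fe : M →ₗ[k] P, IsGEquiv ρM ρP fe ∧ fe ∘ₗ ι = f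

end WeakDefs

/-!
`P` is weakly injective iff `id_P = Tr_G(θ)` for some `k`-endomorphism `θ`: given such `θ`,
`Tr_G(θ ∘ f ∘ r)` extends `f` along a `k`-split embedding with retraction `r`; conversely,
extending `id_P` along the `k`-split embedding `P → P↑G` and restricting to `1 ⊗ P` yields `θ`.
For the diagonal action `Tr_G(θ ⊗ id_N) = Tr_G(θ) ⊗ id_N`, because `g` and `g⁻¹` cancel on `N`.
-/

section Trace

variable {k G : Type u} [CommRing k] [Group G]
variable {L M N : Type u} [AddCommGroup L] [Module k L] [AddCommGroup M] [Module k M]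
  [AddCommGroup N] [Module k N]
variable {ρL : Representation k G L} {ρM : Representation k G M} {ρN : Representation k G N}

lemma IsGEquiv.map_apply {f : M →ₗ[k] N} (hf : IsGEquiv ρM ρN f) (g : G) (x : M) :
    f (ρM g x) = ρN g (f x) :=
  LinearMap.congr_fun (hf g) x

variable [Fintype G]

lemma traceMap_apply (θ : M →ₗ[k] N) (x : M) :
    traceMap ρM ρN θ x = ∑ g : G, ρN g (θ (ρM g⁻¹ x)) := by
  simp only [traceMap, LinearMap.coe_sum, Finset.sum_apply, LinearMap.comp_apply]

lemma isGEquiv_traceMap (θ : M →ₗ[k] N) : IsGEquiv ρM ρN (traceMap ρM ρN θ) := by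
  intro h
  ext x
  simp only [LinearMap.comp_apply, traceMap_apply, map_sum, ← Module.End.mul_apply, ← map_mul]
  exact Fintype.sum_equiv (Equiv.mulLeft h⁻¹) _ _ fun g => by
    simp only [Equiv.coe_mulLeft, mul_inv_rev, inv_inv, mul_inv_cancel_left]

lemma traceMap_comp_of_isGEquiv {ι : L →ₗ[k] M} (hι : IsGEquiv ρL ρM ι) (φ : M →ₗ[k] N) :
    traceMap ρL ρN (φ ∘ₗ ι) = traceMap ρM ρN φ ∘ₗ ι := by
  ext x
  simp only [traceMap_apply, LinearMap.comp_apply, hι.map_apply]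

lemma IsGEquiv.comp_traceMap {f : M →ₗ[k] N} (hf : IsGEquiv ρM ρN f) (φ : L →ₗ[k] M) :
    f ∘ₗ traceMap ρL ρM φ = traceMap ρL ρN (f ∘ₗ φ) := by
  ext x
  simp only [traceMap_apply, LinearMap.comp_apply, map_sum, hf.map_apply]

open TensorProduct in
lemma traceMap_map_id (θ : L →ₗ[k] M) :
    traceMap (ρL.tprod ρN) (ρM.tprod ρN) (map θ LinearMap.id) =
      map (traceMap ρL ρM θ) LinearMap.id := by
  refine TensorProduct.ext' fun x n => ?_
  simp only [traceMap_apply, Representation.tprod_apply, map_tmul, LinearMap.id_apply,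
    Representation.self_inv_apply, sum_tmul]

end Trace

section Induced

variable {k G : Type u} [CommRing k] [Group G]
variable {M : Type u} [AddCommGroup M] [Module k M]

lemma ind_comp_lsingle (g a : G) :
    ind k G M g ∘ₗ Finsupp.lsingle a = Finsupp.lsingle (g * a) := by
  ext m : 1
  exact Finsupp.mapDomain_single

variable [Fintype G]

lemma traceMap_lsingle_one (ρM : Representation k G M) :
    traceMap ρM (ind k G M) (Finsupp.lsingle 1) = indI ρM := by
  simp only [traceMap, indI, ← LinearMap.comp_assoc, ind_comp_lsingle, mul_one]

lemma isGEquiv_indI (ρM : Representation k G M) : IsGEquiv ρM (ind k G M) (indI ρM) :=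
  traceMap_lsingle_one ρM ▸ isGEquiv_traceMap _

lemma lapply_one_comp_indI (ρM : Representation k G M) :
    Finsupp.lapply 1 ∘ₗ indI ρM = LinearMap.id := by
  ext x
  classical
  simp [indI, Finsupp.single_apply]

end Induced

section WeaklyInjective

variable {k G : Type u} [CommRing k] [Group G] [Fintype G]
variable {P : Type u} [AddCommGroup P] [Module k P]

lemma weaklyInjective_of_traceMap_eq_id (ρP : Representation k G P) {θ : P →ₗ[k] P}
    (hθ : traceMap ρP ρP θ = LinearMap.id) : WeaklyInjective ρP := by
  rintro L M _ _ _ _ ρL ρM ι hι ⟨r, hr⟩ f hf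
  refine ⟨traceMap ρM ρP (θ ∘ₗ f ∘ₗ r), isGEquiv_traceMap _, ?_⟩
  calc traceMap ρM ρP (θ ∘ₗ f ∘ₗ r) ∘ₗ ι
      = traceMap ρL ρP (θ ∘ₗ f ∘ₗ r ∘ₗ ι) := (traceMap_comp_of_isGEquiv hι _).symm
    _ = traceMap ρP ρP θ ∘ₗ f := by rw [hr, LinearMap.comp_id, traceMap_comp_of_isGEquiv hf]
    _ = f := by rw [hθ, LinearMap.id_comp]

lemma exists_traceMap_eq_id_of_weaklyInjective {ρP : Representation k G P}
    (hP : WeaklyInjective ρP) : ∃ θ : P →ₗ[k] P, traceMap ρP ρP θ = LinearMap.id := by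
  obtain ⟨e, he, he_indI⟩ := hP P (G →₀ P) ρP (ind k G P) (indI ρP) (isGEquiv_indI ρP)
    ⟨Finsupp.lapply 1, lapply_one_comp_indI ρP⟩ LinearMap.id fun g => by simp
  refine ⟨e ∘ₗ Finsupp.lsingle 1, ?_⟩
  rw [← he.comp_traceMap, traceMap_lsingle_one, he_indI]

lemma weaklyInjective_iff_exists_traceMap_eq_id (ρP : Representation k G P) :
    WeaklyInjective ρP ↔ ∃ θ : P →ₗ[k] P, traceMap ρP ρP θ = LinearMap.id :=
  ⟨exists_traceMap_eq_id_of_weaklyInjective, fun ⟨_, hθ⟩ =>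
    weaklyInjective_of_traceMap_eq_id ρP hθ⟩

end WeaklyInjective

open TensorProduct in
/-- if `M` is weakly injective then so is `M ⊗ₖ N` with diagonal action. -/
theorem weaklyInjective_tprod
    {k G : Type u} [CommRing k] [Group G] [Fintype G]
    {M N : Type u} [AddCommGroup M] [Module k M] [AddCommGroup N] [Module k N]
    (ρM : Representation k G M) (ρN : Representation k G N)
    (hM : WeaklyInjective ρM) :
    WeaklyInjective (ρM.tprod ρN) := by
  obtain ⟨θ, hθ⟩ := (weaklyInjective_iff_exists_traceMap_eq_id ρM).mp hM
  refine (weaklyInjective_iff_exists_traceMap_eq_id _).mpr ⟨map θ LinearMap.id, ?_⟩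
  rw [traceMap_map_id, hθ, map_id]
end

section
/- Let G be a finite group, n an integer divisible by |G|, and M a kG-module. Then the multiplication map n·id_M : M → M factors through a weakly injective kG-module; consequently, for any integer r coprime to n, the map r·id_M becomes an isomorphism in the stable module category (i.e., is invertible modulo maps factoring through weakly injective modules). -/
open Finset

universe u

/-- `f : M → N` factors through a weakly injective `kG`-module. -/
def FactorsThroughWeaklyInjective
    {k G : Type u} [CommRing k] [Group G] [Fintype G]
    {M N : Type u} [AddCommGroup M] [Module k M] [AddCommGroup N] [Module k N]
    (ρM : Representation k G M) (ρN : Representation k G N) (f : M →ₗ[k] N) : Prop :=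
  ∃ (W : Rep k G) (p : M →ₗ[k] W) (q : W →ₗ[k] N),
    WeaklyInjective W.ρ ∧ IsGEquiv ρM W.ρ p ∧ IsGEquiv W.ρ ρN q ∧ q ∘ₗ p = f

/-!
`Ind M = kG ⊗ₖ M` is weakly injective: a `kG`-map `L → Ind M` is the same as a `k`-map
`L → M`, so maps into `Ind M` extend along `k`-split monomorphisms by composing with the
`k`-splitting. The composite `M → Ind M → M`, `m ↦ ∑ g, g ⊗ g⁻¹m ↦ ∑ g, g g⁻¹ m`, is
`Tr_G(id) = |G| • id`, so `n • id = (n / |G|) • |G| • id` factors through `Ind M`. If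
`r a + n b = 1`, then `r • (a • id) - id = -b • n • id` factors as well.
-/

section Induction

variable {k G : Type u} [CommRing k] [Group G]
variable {L M N : Type u} [AddCommGroup L] [Module k L] [AddCommGroup M] [Module k M]
  [AddCommGroup N] [Module k N]

lemma IsGEquiv.id (ρM : Representation k G M) : IsGEquiv ρM ρM LinearMap.id := fun g => by
  rw [LinearMap.id_comp, LinearMap.comp_id]

lemma IsGEquiv.zsmul {ρM : Representation k G M} {ρN : Representation k G N} {f : M →ₗ[k] N}
    (hf : IsGEquiv ρM ρN f) (z : ℤ) : IsGEquiv ρM ρN (z • f) := fun g => by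
  rw [LinearMap.smul_comp, LinearMap.comp_smul, hf g]

lemma IsGEquiv.apply {ρM : Representation k G M} {ρN : Representation k G N} {f : M →ₗ[k] N}
    (hf : IsGEquiv ρM ρN f) (g : G) (m : M) : f (ρM g m) = ρN g (f m) :=
  LinearMap.congr_fun (hf g) m

lemma ind_single (g h : G) (m : M) :
    ind k G M g (Finsupp.single h m) = Finsupp.single (g * h) m := by
  simp [ind, Finsupp.mapDomain_single]

lemma ind_apply_mul (g h : G) (x : G →₀ M) : ind k G M g x (g * h) = x h :=
  Finsupp.mapDomain_apply (mul_right_injective g) x h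

lemma isGEquiv_indP (ρM : Representation k G M) : IsGEquiv (ind k G M) ρM (indP ρM) := fun g => by
  refine Finsupp.lhom_ext fun h m => ?_
  simp [ind_single, indP, map_mul]

variable [Fintype G]

/-- The adjunction bijection `Hom_k(L, M) ≃ Hom_kG(L, Ind M)`; its inverse is composition with
evaluation at `1`. -/
noncomputable def toInd (ρL : Representation k G L) (ψ : L →ₗ[k] M) : L →ₗ[k] (G →₀ M) :=
  ∑ g : G, Finsupp.lsingle g ∘ₗ ψ ∘ₗ ρL g⁻¹

lemma toInd_apply (ρL : Representation k G L) (ψ : L →ₗ[k] M) (l : L) :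
    toInd ρL ψ l = ∑ g : G, Finsupp.single g (ψ (ρL g⁻¹ l)) := by
  simp [toInd, LinearMap.sum_apply]

lemma indI_eq_toInd_id (ρM : Representation k G M) : indI ρM = toInd ρM LinearMap.id := by
  simp [indI, toInd]

lemma isGEquiv_toInd (ρL : Representation k G L) (ψ : L →ₗ[k] M) :
    IsGEquiv ρL (ind k G M) (toInd ρL ψ) := fun g => by
  ext l : 1
  simp only [LinearMap.comp_apply, toInd_apply, map_sum, ind_single]
  refine Fintype.sum_equiv (Equiv.mulLeft g⁻¹) _ _ fun x => ?_
  rw [Equiv.coe_mulLeft, mul_inv_cancel_left, mul_inv_rev, inv_inv, map_mul,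
    Module.End.mul_apply]

lemma toInd_comp {ρL : Representation k G L} {ρN : Representation k G N} {ι : L →ₗ[k] N}
    (hι : IsGEquiv ρL ρN ι) (ψ : N →ₗ[k] M) : toInd ρN ψ ∘ₗ ι = toInd ρL (ψ ∘ₗ ι) := by
  ext l : 1
  simp only [LinearMap.comp_apply, toInd_apply, hι.apply]

lemma toInd_lapply_one_comp {ρL : Representation k G L} {f : L →ₗ[k] (G →₀ M)}
    (hf : IsGEquiv ρL (ind k G M) f) : toInd ρL (Finsupp.lapply (R := k) 1 ∘ₗ f) = f := by
  ext l : 1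
  have hcoeff (g : G) : f (ρL g⁻¹ l) 1 = f l g := by
    rw [hf.apply, ← ind_apply_mul (k := k) g⁻¹ g, inv_mul_cancel]
  simp only [toInd_apply, LinearMap.comp_apply, Finsupp.lapply_apply, hcoeff]
  exact Finsupp.univ_sum_single (f l)

lemma ind_weaklyInjective : WeaklyInjective (k := k) (ind k G M) := by
  intro L N _ _ _ _ ρL ρN ι hι ⟨r, hr⟩ f hf
  refine ⟨toInd ρN (Finsupp.lapply 1 ∘ₗ f ∘ₗ r), isGEquiv_toInd _ _, ?_⟩
  rw [toInd_comp hι, LinearMap.comp_assoc, LinearMap.comp_assoc, hr, LinearMap.comp_id,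
    toInd_lapply_one_comp hf]

lemma indP_comp_indI (ρM : Representation k G M) :
    indP ρM ∘ₗ indI ρM = (Fintype.card G : ℤ) • LinearMap.id := by
  ext m : 1
  have hterm (g : G) : indP ρM (Finsupp.single g (ρM g⁻¹ m)) = m := by
    rw [indP, Finsupp.lsum_single, ← Module.End.mul_apply, ← map_mul, mul_inv_cancel, map_one,
      Module.End.one_apply]
  simp [indI_eq_toInd_id, toInd_apply, hterm, Finset.card_univ]

lemma FactorsThroughWeaklyInjective.zsmul {ρM : Representation k G M}
    {ρN : Representation k G N} {f : M →ₗ[k] N} (hf : FactorsThroughWeaklyInjective ρM ρN f)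
    (z : ℤ) : FactorsThroughWeaklyInjective ρM ρN (z • f) := by
  obtain ⟨W, p, q, hW, hp, hq, rfl⟩ := hf
  exact ⟨W, p, z • q, hW, hp, hq.zsmul z, LinearMap.smul_comp z q p⟩

lemma factorsThroughWeaklyInjective_card_smul_id (ρM : Representation k G M) :
    FactorsThroughWeaklyInjective ρM ρM ((Fintype.card G : ℤ) • LinearMap.id) :=
  ⟨Rep.of (ind k G M), indI ρM, indP ρM, ind_weaklyInjective,
    indI_eq_toInd_id ρM ▸ isGEquiv_toInd ρM LinearMap.id, isGEquiv_indP ρM, indP_comp_indI ρM⟩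

end Induction

/-- if `|G|` divides `n`, then `n·id_M` factors through a weakly injective
module; consequently, for `r` coprime to `n`, the map `r·id_M` is invertible modulo maps
factoring through weakly injective modules. -/
theorem nsmul_id_factors_and_coprime_invertible
    {k G : Type u} [CommRing k] [Group G] [Fintype G]
    {M : Type u} [AddCommGroup M] [Module k M] (ρM : Representation k G M)
    (n : ℤ) (hn : (Fintype.card G : ℤ) ∣ n) :
    FactorsThroughWeaklyInjective ρM ρM (n • (LinearMap.id : M →ₗ[k] M)) ∧
    ∀ r : ℤ, IsCoprime r n →
      ∃ σ : M →ₗ[k] M, IsGEquiv ρM ρM σ ∧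
        FactorsThroughWeaklyInjective ρM ρM
          (r • σ - (LinearMap.id : M →ₗ[k] M)) := by
  obtain ⟨c, hc⟩ := hn
  have hfac : FactorsThroughWeaklyInjective ρM ρM (n • (LinearMap.id : M →ₗ[k] M)) := by
    rw [hc, mul_comm, mul_smul]
    exact (factorsThroughWeaklyInjective_card_smul_id ρM).zsmul c
  refine ⟨hfac, fun r ⟨a, b, hab⟩ => ⟨a • LinearMap.id, (IsGEquiv.id ρM).zsmul a, ?_⟩⟩
  convert hfac.zsmul (-b) using 1
  linear_combination (norm := module) hab • (LinearMap.id : M →ₗ[k] M)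
end
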